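/- If ℓ_1, ℓ_2 ∈ ℕ^r satisfy F(ℓ_2) ⊆ F(ℓ_1), then there exist an integer n ≥ 0 and lattice points m_0, m_1, …, m_n ∈ ℕ^r such that F(m_0) = F(ℓ_1), F(m_n) = F(ℓ_2), and for each 0 ≤ k < n one has F(m_{k+1}) ⊆ F(m_k) with dim_ℂ F(m_k)/F(m_{k+1}) = 1. In other words, any inclusion between members of the family {F(ℓ)} can be filled by a chain of members with codimension-one steps. -/

import Mathlib

/-!
Since `Ḡ(a) ∩ Ḡ(b) = Ḡ(a ⊔ b)`, the hypothesis gives `F(ℓ₂) = F(ℓ₁ ⊔ ℓ₂)`, and `ℓ₁ ≤ ℓ₁ ⊔ ℓ₂`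
are joined by a chain of unit increments in `ℕ^r`. Raising `ℓ_i` by one cuts `F(ℓ)` down to the
kernel of the coefficient functional `f ↦ [T^{ℓ_i}] f_i`, so every step has codimension at most
one; discarding the steps of codimension zero leaves the required chain.
-/

noncomputable def Gbar (r : ℕ) (ℓ : Fin r → ℕ) : Submodule ℂ (Fin r → PowerSeries ℂ) where
  carrier := {f | ∀ i : Fin r, (ℓ i : ℕ∞) ≤ (f i).order}
  zero_mem' := by
    intro i
    simp [PowerSeries.order_zero]
  add_mem' := by
    intro a b ha hb i
    refine le_trans (le_min (ha i) (hb i)) ?_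
    simpa using PowerSeries.min_order_le_order_add (a i) (b i)
  smul_mem' := by
    intro c f hf i
    refine PowerSeries.le_order _ _ ?_
    intro n hn
    have hlt : (n : ℕ∞) < ((f : Fin r → PowerSeries ℂ) i).order := lt_of_lt_of_le hn (hf i)
    have : (PowerSeries.coeff n) ((c • f) i) = c • (PowerSeries.coeff n) (f i) := by
      simp
    rw [this, PowerSeries.coeff_of_lt_order n hlt, smul_zero]

noncomputable def Ffil (r : ℕ) (O : Submodule ℂ (Fin r → PowerSeries ℂ)) (ℓ : Fin r → ℕ) :
    Submodule ℂ (Fin r → PowerSeries ℂ) :=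
  O ⊓ Gbar r ℓ

noncomputable def hfun (r : ℕ) (O : Submodule ℂ (Fin r → PowerSeries ℂ)) (ℓ : Fin r → ℕ) : ℕ :=
  Module.finrank ℂ (O ⧸ (Gbar r ℓ).comap O.subtype)

noncomputable def hbarfun (r : ℕ) (O : Submodule ℂ (Fin r → PowerSeries ℂ)) (ℓ : Fin r → ℕ) : ℕ :=
  Module.finrank ℂ ((Fin r → PowerSeries ℂ) ⧸ (Gbar r ℓ ⊔ O))

def eN {r : ℕ} (i : Fin r) : Fin r → ℕ := fun j => if j = i then 1 else 0

open Function Relation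

theorem PowerSeries.coe_add_one_le_order_iff {R : Type*} [Semiring R] {φ : PowerSeries R} {n : ℕ}
    (hn : (n : ℕ∞) ≤ φ.order) : ((n + 1 : ℕ) : ℕ∞) ≤ φ.order ↔ PowerSeries.coeff n φ = 0 := by
  refine ⟨fun h => PowerSeries.coeff_of_lt_order n (lt_of_lt_of_le (by norm_cast; omega) h),
    fun h => ?_⟩
  refine PowerSeries.nat_le_order φ _ fun i hi => ?_
  rcases Nat.lt_succ_iff_lt_or_eq.mp hi with hlt | rfl
  · exact PowerSeries.coeff_of_lt_order i (lt_of_lt_of_le (by exact_mod_cast hlt) hn)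
  · exact h

theorem Relation.ReflTransGen.exists_seq {α : Type*} {R : α → α → Prop} {a b : α}
    (h : ReflTransGen R a b) :
    ∃ (n : ℕ) (m : ℕ → α), m 0 = a ∧ m n = b ∧ ∀ k < n, R (m k) (m (k + 1)) := by
  induction h using ReflTransGen.head_induction_on with
  | refl => exact ⟨0, fun _ => b, rfl, rfl, fun k hk => absurd hk k.not_lt_zero⟩
  | head hac _ ih =>
    obtain ⟨n, m, h0, hn, hstep⟩ := ih
    refine ⟨n + 1, fun | 0 => _ | k + 1 => m k, rfl, hn, fun k hk => ?_⟩
    rcases k with _ | k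
    · simpa [h0] using hac
    · exact hstep k (by omega)

theorem Relation.ReflTransGen.exists_of_reflGen_comp {α β : Type*} {F : α → β}
    {R : β → β → Prop} {a b : α} (h : ReflTransGen (ReflGen R on F) a b) :
    ∃ c, F c = F b ∧ ReflTransGen (R on F) a c := by
  induction h with
  | refl => exact ⟨a, rfl, .refl⟩
  | tail _ hbc ih =>
    obtain ⟨c, hc, hac⟩ := ih
    rcases (reflGen_iff _ _ _).mp hbc with hbc | hbc
    · exact ⟨c, hc.trans hbc.symm, hac⟩
    · exact ⟨_, rfl, hac.tail (show R (F c) _ from hc ▸ hbc)⟩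

section CodimOne

variable {K V : Type*} [DivisionRing K] [AddCommGroup V] [Module K V]

def CodimOneStep (p q : Submodule K V) : Prop :=
  q ≤ p ∧ Module.finrank K (p ⧸ q.comap p.subtype) = 1

theorem reflGen_codimOneStep_of_comap_eq_ker {p q : Submodule K V} (hqp : q ≤ p)
    (φ : p →ₗ[K] K) (hφ : q.comap p.subtype = LinearMap.ker φ) : ReflGen CodimOneStep p q := by
  rcases φ.surjective_or_eq_zero with hsurj | rfl
  · refine .single ⟨hqp, ?_⟩
    rw [hφ, (φ.quotKerEquivOfSurjective hsurj).finrank_eq, Module.finrank_self]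
  · rw [LinearMap.ker_zero, Submodule.comap_subtype_eq_top] at hφ
    rw [le_antisymm hqp hφ]

end CodimOne

section Filtration

variable {r : ℕ}

theorem mem_Gbar {ℓ : Fin r → ℕ} {f : Fin r → PowerSeries ℂ} :
    f ∈ Gbar r ℓ ↔ ∀ i, (ℓ i : ℕ∞) ≤ (f i).order :=
  Iff.rfl

theorem Gbar_antitone : Antitone (Gbar r) := fun _ _ hab _ hf i =>
  le_trans (by exact_mod_cast hab i) (mem_Gbar.mp hf i)

theorem Gbar_sup (a b : Fin r → ℕ) : Gbar r (a ⊔ b) = Gbar r a ⊓ Gbar r b := by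
  ext f
  simp only [Submodule.mem_inf, mem_Gbar, Pi.sup_apply, Nat.mono_cast.map_max, max_le_iff,
    forall_and]

variable (O : Submodule ℂ (Fin r → PowerSeries ℂ))

theorem Ffil_antitone : Antitone (Ffil r O) := fun _ _ hab => inf_le_inf_left O (Gbar_antitone hab)

theorem Ffil_sup (a b : Fin r → ℕ) : Ffil r O (a ⊔ b) = Ffil r O a ⊓ Ffil r O b := by
  rw [Ffil, Ffil, Ffil, Gbar_sup, inf_inf_distrib_left]

theorem mem_Gbar_iff_coeff_eq_zero {a b : Fin r → ℕ} {i : Fin r} (hi : a i + 1 = b i)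
    (hne : ∀ j ≠ i, a j = b j) {f : Fin r → PowerSeries ℂ} (hf : f ∈ Gbar r a) :
    f ∈ Gbar r b ↔ PowerSeries.coeff (a i) (f i) = 0 := by
  rw [← PowerSeries.coe_add_one_le_order_iff (hf i), hi, mem_Gbar]
  refine ⟨fun h => h i, fun h j => ?_⟩
  obtain rfl | hj := eq_or_ne j i
  · exact h
  · exact hne j hj ▸ hf j

theorem reflGen_codimOneStep_Ffil_of_covBy {a b : Fin r → ℕ} (hab : a ⋖ b) :
    ReflGen CodimOneStep (Ffil r O a) (Ffil r O b) := by
  obtain ⟨i, hi, hne⟩ := Pi.covBy_iff.mp hab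
  refine reflGen_codimOneStep_of_comap_eq_ker (Ffil_antitone O hab.le)
    ((PowerSeries.coeff (a i)).comp ((LinearMap.proj i).comp (Ffil r O a).subtype)) ?_
  ext ⟨f, hf⟩
  obtain ⟨hfO, hfa⟩ := Submodule.mem_inf.mp hf
  change f ∈ O ⊓ Gbar r b ↔ PowerSeries.coeff (a i) (f i) = 0
  rw [Submodule.mem_inf, and_iff_right hfO]
  exact mem_Gbar_iff_coeff_eq_zero (Nat.covBy_iff_add_one_eq.mp hi) hne hfa

end Filtration

theorem statement13_general (r : ℕ) (O : Submodule ℂ (Fin r → PowerSeries ℂ))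
    (ℓ₁ ℓ₂ : Fin r → ℕ) (hle : Ffil r O ℓ₂ ≤ Ffil r O ℓ₁) :
    ∃ (n : ℕ) (m : ℕ → (Fin r → ℕ)),
      Ffil r O (m 0) = Ffil r O ℓ₁ ∧
      Ffil r O (m n) = Ffil r O ℓ₂ ∧
      ∀ k < n, Ffil r O (m (k + 1)) ≤ Ffil r O (m k) ∧
        Module.finrank ℂ
          (Ffil r O (m k) ⧸ (Ffil r O (m (k + 1))).comap (Ffil r O (m k)).subtype) = 1 := by
  have hcovBy : ReflTransGen (· ⋖ ·) ℓ₁ (ℓ₁ ⊔ ℓ₂) := le_iff_reflTransGen_covBy.mp le_sup_left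
  have hsteps : ReflTransGen (ReflGen CodimOneStep on Ffil r O) ℓ₁ (ℓ₁ ⊔ ℓ₂) :=
    ReflTransGen.mono (fun _ _ => reflGen_codimOneStep_Ffil_of_covBy O) _ _ hcovBy
  obtain ⟨c, hc, hchain⟩ := hsteps.exists_of_reflGen_comp
  obtain ⟨n, m, h0, hn, hstep⟩ := hchain.exists_seq
  refine ⟨n, m, congrArg (Ffil r O) h0, ?_, hstep⟩
  rw [hn, hc, Ffil_sup, inf_eq_right.mpr hle]

/-- any inclusion `F(ℓ₂) ⊆ F(ℓ₁)` between members of the family `{F(ℓ)}` can be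
filled by a chain of members with codimension-one steps. -/
theorem statement13 (r : ℕ) (hr : 1 ≤ r) (O : Submodule ℂ (Fin r → PowerSeries ℂ))
    (ℓ₁ ℓ₂ : Fin r → ℕ) (hle : Ffil r O ℓ₂ ≤ Ffil r O ℓ₁) :
    ∃ (n : ℕ) (m : ℕ → (Fin r → ℕ)),
      Ffil r O (m 0) = Ffil r O ℓ₁ ∧
      Ffil r O (m n) = Ffil r O ℓ₂ ∧
      ∀ k < n, Ffil r O (m (k + 1)) ≤ Ffil r O (m k) ∧
        Module.finrank ℂ
          (Ffil r O (m k) ⧸ (Ffil r O (m (k + 1))).comap (Ffil r O (m k)).subtype) = 1 :=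
  statement13_general r O ℓ₁ ℓ₂ hle
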